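/- Let (𝒜, φ) be a non-commutative probability space and, for each N ≥ 1, let a_1, …, a_N ∈ 𝒜 satisfy φ(a_i) = 0, φ(a_i²) = 1, be BMT independent with respect to a digraph G_N = ([N], E_N), and have uniformly bounded moments of all orders (for each n ≥ 1, sup_{i,N} |φ(a_i^n)| < ∞). Then for each integer m ≥ 1 there exists a constant C such that for all N ≥ 1: |φ(((a_1 + ⋯ + a_N)/√N)^m) − Σ_{π ∈ P₂(m)} N^{−m/2} · #{ i : [m] → [N] : ker[i] = π and every edge of G_{π(i)} is an edge of G_N }| ≤ C · N^{−1/2}. -/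
import Mathlib


open scoped Classical
open Filter

noncomputable section

/-- The relation defining the kernel of `f` restricted to the index set `S`,
subordinated to the digraph with edge relation `E`: `k ∼ k'` iff `f k = f k'` and
every `l ∈ S` strictly between `k` and `k'` with `f l ≠ f k` satisfies `(f l, f k) ∈ E`. -/
def kerGRelOn {m : ℕ} {V : Type*} (E : V → V → Prop) (f : Fin m → V)
    (S : Finset (Fin m)) (k k' : Fin m) : Prop :=
  f k = f k' ∧ ∀ l ∈ S, min k k' < l → l < max k k' → f l ≠ f k → E (f l) (f k)

/-- The blocks of the kernel of `f|_S` subordinated to the digraph `E`. -/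
def kerGBlocks {m : ℕ} {V : Type*} (E : V → V → Prop) (f : Fin m → V)
    (S : Finset (Fin m)) : Finset (Finset (Fin m)) :=
  S.image fun k => S.filter fun k' => kerGRelOn E f S k k'

/-- The blocks of the plain kernel `ker[f]` of `f : [m] → V`. -/
def kerBlocks {m : ℕ} {V : Type*} (f : Fin m → V) : Finset (Finset (Fin m)) :=
  Finset.univ.image fun k => Finset.univ.filter fun k' => f k = f k'

/-- The product of `a k` for `k ∈ B`, taken in increasing order of `k`. -/
def blockProd {A : Type*} [Monoid A] {m : ℕ} (a : Fin m → A) (B : Finset (Fin m)) : A :=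
  ((B.sort (· ≤ ·)).map a).prod

/-- The edge set of the nesting-crossing graph of the partition `π`, relabeled along `f`:
the pair `(f-label of B, f-label of C)` is an edge whenever `B ≠ C` are blocks of `π` and
some `l ∈ B` lies strictly between two elements (equivalently, between min and max) of `C`. -/
def nestCrossEdges {m : ℕ} {V : Type*} (π : Finset (Finset (Fin m))) (f : Fin m → V) :
    Set (V × V) :=
  { p | ∃ B ∈ π, ∃ C ∈ π, B ≠ C ∧
      (∃ l ∈ B, ∃ c₁ ∈ C, ∃ c₂ ∈ C, c₁ < l ∧ l < c₂) ∧
      (∃ k ∈ B, f k = p.1) ∧ (∃ k' ∈ C, f k' = p.2) }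

/-- A family of (non-unital) subalgebras of a non-commutative probability space `(𝒜, φ)`
is BMT independent with respect to the digraph `E` on the index set `I`. -/
def BMTIndep {𝒜 : Type*} [Ring 𝒜] [Algebra ℂ 𝒜] (φ : 𝒜 →ₗ[ℂ] ℂ)
    {I : Type*} (E : I → I → Prop) (A : I → NonUnitalSubalgebra ℂ 𝒜) : Prop :=
  ∀ (m : ℕ), 1 ≤ m → ∀ (idx : Fin m → I) (a : Fin m → 𝒜),
    (∀ k, a k ∈ A (idx k)) →
    φ (List.ofFn a).prod = ∏ B ∈ kerGBlocks E idx Finset.univ, φ (blockProd a B)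

/-- Random variables `a 0, …, a (N-1)` are BMT independent with respect to the digraph `E`. -/
def BMTIndepVars {𝒜 : Type*} [Ring 𝒜] [Algebra ℂ 𝒜] (φ : 𝒜 →ₗ[ℂ] ℂ)
    {N : ℕ} (E : Fin N → Fin N → Prop) (a : Fin N → 𝒜) : Prop :=
  ∀ (m : ℕ) (idx : Fin m → Fin N),
    φ (List.ofFn fun k => a (idx k)).prod
      = ∏ B ∈ kerGBlocks E idx Finset.univ, φ (blockProd (fun k => a (idx k)) B)


/-! ### Auxiliary machinery -/

namespace Stmt13Aux

lemma sum_pow_eq {𝒜 : Type*} [Ring 𝒜] (N : ℕ) (a : Fin N → 𝒜) (m : ℕ) :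
    (∑ i, a i) ^ m = ∑ idx : Fin m → Fin N, (List.ofFn fun k => a (idx k)).prod := by
  induction m with
  | zero => simp
  | succ m ih =>
    rw [pow_succ', ih, Finset.sum_mul_sum]
    have h2 : ∀ p : Fin N × (Fin m → Fin N),
        a p.1 * (List.ofFn fun k => a (p.2 k)).prod
          = (List.ofFn fun k => a ((Fin.consEquiv (fun _ => Fin N)) p k)).prod := by
      intro p
      simp [List.ofFn_succ, Fin.cons_zero, Fin.cons_succ, Fin.consEquiv]
    calc (∑ i : Fin N, ∑ j : Fin m → Fin N, a i * (List.ofFn fun k => a (j k)).prod)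
        = ∑ p : Fin N × (Fin m → Fin N), a p.1 * (List.ofFn fun k => a (p.2 k)).prod := by
          rw [Fintype.sum_prod_type]
      _ = ∑ idx : Fin (m + 1) → Fin N, (List.ofFn fun k => a (idx k)).prod :=
          Fintype.sum_equiv (Fin.consEquiv (fun _ => Fin N)) _ _ h2

variable {m : ℕ} {V : Type*} (E : V → V → Prop) (f : Fin m → V)

def blk (k : Fin m) : Finset (Fin m) :=
  Finset.univ.filter fun k' => kerGRelOn E f Finset.univ k k'

def fib (k : Fin m) : Finset (Fin m) :=
  Finset.univ.filter fun k' => f k = f k'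

lemma kerGBlocks_eq : kerGBlocks E f Finset.univ = Finset.univ.image (blk E f) := rfl
lemma kerBlocks_eq : kerBlocks f = Finset.univ.image (fib f) := rfl

lemma mem_blk_self (k : Fin m) : k ∈ blk E f k := by
  simp only [blk, Finset.mem_filter, Finset.mem_univ, true_and]
  exact ⟨rfl, fun l _ h1 h2 _ => absurd (h1.trans h2) (by simp)⟩

lemma mem_fib (k k' : Fin m) : k' ∈ fib f k ↔ f k = f k' := by simp [fib]

lemma blk_subset_fib (k : Fin m) : blk E f k ⊆ fib f k := by
  intro k' hk'
  simp only [blk, Finset.mem_filter] at hk'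
  exact (mem_fib f k k').2 hk'.2.1

lemma fib_congr {k k' : Fin m} (h : f k = f k') : fib f k = fib f k' := by
  ext l; simp [mem_fib, h]

lemma blockProd_const {A : Type*} [Monoid A] (a : Fin m → A) (B : Finset (Fin m)) (x : A)
    (h : ∀ k ∈ B, a k = x) : blockProd a B = x ^ B.card := by
  have hl : (B.sort (· ≤ ·)).map a = List.replicate B.card x := by
    apply List.eq_replicate_iff.2
    constructor
    · simp
    · intro b hb
      rcases List.mem_map.1 hb with ⟨k, hk, rfl⟩
      exact h k ((Finset.mem_sort _).1 hk)
  rw [blockProd, hl, List.prod_replicate]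

lemma blockProd_singleton {A : Type*} [Monoid A] (a : Fin m → A) (k : Fin m) :
    blockProd a {k} = a k := by
  simp [blockProd, Finset.sort_singleton]

lemma card_small_image (m N r : ℕ) (hm : 1 ≤ m) :
    ((Finset.univ : Finset (Fin m → Fin N)).filter
      fun idx => (Finset.univ.image idx).card ≤ r).card ≤ m ^ m * N ^ r := by
  classical
  have hcard : ((Finset.univ : Finset ((Fin m → Fin m) × (Fin r → Fin N)))).card
      = m ^ m * N ^ r := by
    simp [Fintype.card_fun]
  rw [← hcard]
  by_cases hN : N = 0
  · subst hN
    have : (Finset.univ : Finset (Fin m → Fin 0)) = ∅ := by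
      rw [Finset.univ_eq_empty_iff]
      exact ⟨fun f => (f ⟨0, hm⟩).elim0⟩
    simp [this]
  have hN' : 0 < N := Nat.pos_of_ne_zero hN
  set d : Fin N := ⟨0, hN'⟩
  set L : (Fin m → Fin N) → List (Fin N) := fun idx => (Finset.univ.image idx).sort (· ≤ ·)
    with hL
  have hmemL : ∀ (idx : Fin m → Fin N) (k : Fin m), idx k ∈ L idx := by
    intro idx k
    rw [hL]
    simp only [Finset.mem_sort, Finset.mem_image]
    exact ⟨k, Finset.mem_univ k, rfl⟩
  have hlen : ∀ idx : Fin m → Fin N, (L idx).length = (Finset.univ.image idx).card := by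
    intro idx; rw [hL]; exact Finset.length_sort _
  have hidxlt : ∀ (idx : Fin m → Fin N) (k : Fin m),
      (L idx).idxOf (idx k) < (L idx).length :=
    fun idx k => List.idxOf_lt_length_iff.2 (hmemL idx k)
  set Ψ : (Fin m → Fin N) → (Fin m → Fin m) × (Fin r → Fin N) := fun idx =>
    (fun k => ⟨(L idx).idxOf (idx k), lt_of_lt_of_le (hidxlt idx k)
        (by rw [hlen]; exact le_trans (Finset.card_image_le.trans (by simp)) (le_refl m))⟩,
     fun j => (L idx).getD j d) with hΨ
  apply Finset.card_le_card_of_injOn Ψ (fun _ _ => Finset.mem_univ _)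
  intro idx₁ h₁ idx₂ h₂ heq
  simp only [Finset.mem_coe, Finset.mem_filter] at h₁ h₂
  funext k
  have hlt₁ : (L idx₁).idxOf (idx₁ k) < r := lt_of_lt_of_le (hidxlt idx₁ k)
    (by rw [hlen]; exact h₁.2)
  have hlt₂ : (L idx₂).idxOf (idx₂ k) < r := lt_of_lt_of_le (hidxlt idx₂ k)
    (by rw [hlen]; exact h₂.2)
  have hfe : (Ψ idx₁).1 k = (Ψ idx₂).1 k := by rw [heq]
  have hne : (L idx₁).idxOf (idx₁ k) = (L idx₂).idxOf (idx₂ k) := by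
    exact congrArg Fin.val hfe
  have hge : (Ψ idx₁).2 ⟨(L idx₁).idxOf (idx₁ k), hlt₁⟩
      = (Ψ idx₂).2 ⟨(L idx₁).idxOf (idx₁ k), hlt₁⟩ := by rw [heq]
  have hrec : ∀ idx : Fin m → Fin N, ∀ k : Fin m,
      (L idx).getD ((L idx).idxOf (idx k)) d = idx k := by
    intro idx k
    rw [List.getD_eq_getElem _ _ (hidxlt idx k)]
    exact List.getElem_idxOf (hidxlt idx k)
  calc idx₁ k = (L idx₁).getD ((L idx₁).idxOf (idx₁ k)) d := (hrec idx₁ k).symm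
    _ = (L idx₂).getD ((L idx₂).idxOf (idx₂ k)) d := by
        simpa [hΨ, hne] using hge
    _ = idx₂ k := hrec idx₂ k

lemma image_card_small {m N : ℕ} (f : Fin m → Fin N)
    (h2 : ∀ k, 2 ≤ (fib f k).card)
    (h3 : ∃ k, (fib f k).card ≠ 2) :
    (Finset.univ.image f).card ≤ (m - 1) / 2 := by
  classical
  have hsum : (Finset.univ : Finset (Fin m)).card
      = ∑ v ∈ Finset.univ.image f, (Finset.univ.filter fun k => f k = v).card :=
    Finset.card_eq_sum_card_fiberwise (fun x _ => Finset.mem_image_of_mem f (Finset.mem_univ x))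
  have hfib : ∀ k : Fin m, (Finset.univ.filter fun k' => f k' = f k) = fib f k := by
    intro k; ext k'; simp [fib, eq_comm]
  obtain ⟨k₀, hk₀⟩ := h3
  have h3' : 3 ≤ (Finset.univ.filter fun k => f k = f k₀).card := by
    rw [hfib]
    have := h2 k₀
    omega
  have hlt : ∑ v ∈ Finset.univ.image f, 2
      < ∑ v ∈ Finset.univ.image f, (Finset.univ.filter fun k => f k = v).card := by
    apply Finset.sum_lt_sum
    · intro v hv
      rcases Finset.mem_image.1 hv with ⟨k, _, rfl⟩
      rw [hfib]; exact h2 k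
    · refine ⟨f k₀, Finset.mem_image_of_mem f (Finset.mem_univ k₀), ?_⟩
      omega
  rw [← hsum] at hlt
  simp only [Finset.sum_const, smul_eq_mul, Finset.card_univ, Fintype.card_fin] at hlt
  omega

end Stmt13Aux

open Stmt13Aux

/-- BMT central limit theorem, with explicit error term of order `N^{-1/2}`. -/
theorem stmt13 {𝒜 : Type*} [Ring 𝒜] [Algebra ℂ 𝒜] (φ : 𝒜 →ₗ[ℂ] ℂ) (hφ : φ 1 = 1)
    (a : (N : ℕ) → Fin N → 𝒜) (E : (N : ℕ) → Fin N → Fin N → Prop)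
    (hE : ∀ N v, ¬ E N v v)
    (hmean : ∀ N i, φ (a N i) = 0)
    (hvar : ∀ N i, φ (a N i * a N i) = 1)
    (hindep : ∀ N, BMTIndepVars φ (E N) (a N))
    (hmom : ∀ n : ℕ, ∃ C : ℝ, ∀ N, ∀ i : Fin N, ‖φ (a N i ^ n)‖ ≤ C) :
    ∀ m : ℕ, 1 ≤ m → ∃ C : ℝ, ∀ N : ℕ, 1 ≤ N →
      ‖φ ((∑ i : Fin N, a N i) ^ m) / ((Real.sqrt N : ℝ) : ℂ) ^ m
        - (((Finset.univ.filter fun idx : Fin m → Fin N =>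
              (∀ B ∈ kerBlocks idx, B.card = 2) ∧
              ∀ p ∈ nestCrossEdges (kerBlocks idx) idx, E N p.1 p.2).card : ℂ)
            / ((Real.sqrt N : ℝ) : ℂ) ^ m)‖
        ≤ C / Real.sqrt N := by
  intro m hm
  classical
  choose Cf hCf using hmom
  set D : ℝ := 1 + ∑ n ∈ Finset.range (m + 1), |Cf n| with hD
  have hD1 : 1 ≤ D := by
    have : 0 ≤ ∑ n ∈ Finset.range (m + 1), |Cf n| :=
      Finset.sum_nonneg fun n _ => abs_nonneg _
    linarith
  have hCfD : ∀ n ≤ m, ∀ N, ∀ i : Fin N, ‖φ (a N i ^ n)‖ ≤ D := by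
    intro n hn N i
    have h1 : |Cf n| ≤ ∑ n ∈ Finset.range (m + 1), |Cf n| :=
      Finset.single_le_sum (fun n _ => abs_nonneg (Cf n))
        (Finset.mem_range.2 (Nat.lt_succ_of_le hn))
    have := hCf n N i
    have := le_abs_self (Cf n)
    linarith
  refine ⟨(m : ℝ) ^ m * D ^ m, ?_⟩
  intro N hN
  set s : ℝ := Real.sqrt N with hs
  have hs0 : 0 < s := Real.sqrt_pos.2 (by exact_mod_cast hN)
  have hs1 : 1 ≤ s := by
    rw [hs, show (1 : ℝ) = Real.sqrt 1 from (Real.sqrt_one).symm]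
    exact Real.sqrt_le_sqrt (by exact_mod_cast hN)
  have hs2 : s ^ 2 = N := Real.sq_sqrt (by positivity)
  set T : (Fin m → Fin N) → ℂ := fun idx =>
    ∏ B ∈ kerGBlocks (E N) idx Finset.univ, φ (blockProd (fun k => a N (idx k)) B) with hT
  -- moment expansion
  have hexp : φ ((∑ i : Fin N, a N i) ^ m) = ∑ idx : Fin m → Fin N, T idx := by
    rw [sum_pow_eq, map_sum]
    exact Finset.sum_congr rfl fun idx _ => hindep N m idx
  set P : (Fin m → Fin N) → Prop := fun idx =>
    (∀ B ∈ kerBlocks idx, B.card = 2) ∧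
      ∀ p ∈ nestCrossEdges (kerBlocks idx) idx, E N p.1 p.2 with hP
  set F : Finset (Fin m → Fin N) := Finset.univ.filter P with hF
  -- value facts
  have hfibval : ∀ (idx : Fin m → Fin N) (k k' : Fin m), k' ∈ fib idx k → idx k' = idx k :=
    fun idx k k' h => ((mem_fib idx k k').1 h).symm
  -- Step A : on F the term is 1
  have hstepA : ∀ idx ∈ F, T idx = 1 := by
    intro idx hidx
    rw [hF, Finset.mem_filter] at hidx
    obtain ⟨-, hpair, hedge⟩ := hidx
    have hblkeq : ∀ k, blk (E N) idx k = fib idx k := by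
      intro k
      apply Finset.Subset.antisymm (blk_subset_fib _ _ _)
      intro k' hk'
      have hkk' : idx k = idx k' := (mem_fib idx k k').1 hk'
      simp only [blk, Finset.mem_filter, Finset.mem_univ, true_and]
      refine ⟨hkk', fun l _ h1 h2 hne => ?_⟩
      have hmem : ((idx l, idx k) : Fin N × Fin N) ∈ nestCrossEdges (kerBlocks idx) idx := by
        refine ⟨fib idx l, ?_, fib idx k, ?_, ?_, ?_, ⟨l, (mem_fib idx l l).2 rfl, rfl⟩,
          ⟨k, (mem_fib idx k k).2 rfl, rfl⟩⟩
        · rw [kerBlocks_eq]; exact Finset.mem_image_of_mem _ (Finset.mem_univ l)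
        · rw [kerBlocks_eq]; exact Finset.mem_image_of_mem _ (Finset.mem_univ k)
        · intro hcon
          exact hne (((mem_fib idx l k).1 (hcon ▸ (mem_fib idx k k).2 rfl)).symm ▸ rfl)
        · refine ⟨l, (mem_fib idx l l).2 rfl, min k k', ?_, max k k', ?_, h1, h2⟩
          · rcases le_total k k' with h | h
            · rw [min_eq_left h]; exact (mem_fib idx k k).2 rfl
            · rw [min_eq_right h]; exact (mem_fib idx k k').2 hkk'
          · rcases le_total k k' with h | h
            · rw [max_eq_right h]; exact (mem_fib idx k k').2 hkk'
            · rw [max_eq_left h]; exact (mem_fib idx k k).2 rfl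
      exact hedge _ hmem
    have hGB : kerGBlocks (E N) idx Finset.univ = kerBlocks idx := by
      rw [kerGBlocks_eq, kerBlocks_eq]
      exact Finset.image_congr fun k _ => hblkeq k
    rw [hT]
    simp only [hGB]
    apply Finset.prod_eq_one
    intro B hB
    rw [kerBlocks_eq] at hB
    rcases Finset.mem_image.1 hB with ⟨k, -, rfl⟩
    have hcard : (fib idx k).card = 2 := hpair _ (by
      rw [kerBlocks_eq]; exact Finset.mem_image_of_mem _ (Finset.mem_univ k))
    have : blockProd (fun k' => a N (idx k')) (fib idx k) = a N (idx k) ^ (fib idx k).card :=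
      blockProd_const _ _ _ fun k' hk' => by rw [hfibval idx k k' hk']
    rw [this, hcard, pow_two]
    exact hvar N (idx k)
  -- Step C : uniform bound
  have hstepC : ∀ idx : Fin m → Fin N, ‖T idx‖ ≤ D ^ m := by
    intro idx
    rw [hT]
    simp only
    rw [norm_prod]
    calc ∏ B ∈ kerGBlocks (E N) idx Finset.univ, ‖φ (blockProd (fun k => a N (idx k)) B)‖
        ≤ ∏ _B ∈ kerGBlocks (E N) idx Finset.univ, D := by
          apply Finset.prod_le_prod (fun _ _ => norm_nonneg _)
          intro B hB
          rw [kerGBlocks_eq] at hB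
          rcases Finset.mem_image.1 hB with ⟨k, -, rfl⟩
          have hconst : blockProd (fun k' => a N (idx k')) (blk (E N) idx k)
              = a N (idx k) ^ (blk (E N) idx k).card :=
            blockProd_const _ _ _ fun k' hk' => by
              rw [hfibval idx k k' (blk_subset_fib _ _ _ hk')]
          rw [hconst]
          exact hCfD _ (le_trans (Finset.card_le_card (Finset.subset_univ _)) (by simp)) N _
      _ = D ^ (kerGBlocks (E N) idx Finset.univ).card := Finset.prod_const D
      _ ≤ D ^ m := by
          apply pow_le_pow_right₀ (by linarith)
          rw [kerGBlocks_eq]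
          exact le_trans Finset.card_image_le (by simp)
  -- Step B : outside F, the term vanishes or the image is small
  have hstepB : ∀ idx : Fin m → Fin N, ¬ P idx →
      T idx = 0 ∨ (Finset.univ.image idx).card ≤ (m - 1) / 2 := by
    intro idx hidx
    by_cases hsing : ∃ k, (blk (E N) idx k).card = 1
    · left
      obtain ⟨k, hk⟩ := hsing
      have hbk : blk (E N) idx k = {k} := by
        rcases Finset.card_eq_one.1 hk with ⟨x, hx⟩
        have := mem_blk_self (E N) idx k
        rw [hx] at this ⊢
        rw [Finset.mem_singleton.1 this]
      rw [hT]
      apply Finset.prod_eq_zero (i := blk (E N) idx k)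
        (by rw [kerGBlocks_eq]; exact Finset.mem_image_of_mem _ (Finset.mem_univ k))
      rw [hbk, blockProd_singleton]
      exact hmean N (idx k)
    · push_neg at hsing
      have hblk2 : ∀ k, 2 ≤ (blk (E N) idx k).card := by
        intro k
        have h1 : 0 < (blk (E N) idx k).card :=
          Finset.card_pos.2 ⟨k, mem_blk_self (E N) idx k⟩
        have := hsing k
        omega
      have hfib2 : ∀ k, 2 ≤ (fib idx k).card :=
        fun k => le_trans (hblk2 k) (Finset.card_le_card (blk_subset_fib _ _ _))
      by_cases hall2 : ∀ k, (fib idx k).card = 2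
      · exfalso
        have hpair : ∀ B ∈ kerBlocks idx, B.card = 2 := by
          intro B hB
          rw [kerBlocks_eq] at hB
          rcases Finset.mem_image.1 hB with ⟨k, -, rfl⟩
          exact hall2 k
        rw [hP, not_and] at hidx
        push_neg at hidx
        obtain ⟨p, hp, hpE⟩ := hidx hpair
        obtain ⟨B, hB, C, hC, hBC, ⟨l, hl, c₁, hc₁, c₂, hc₂, hlt1, hlt2⟩,
          ⟨k₀, hk₀, hk₀v⟩, ⟨k₁, hk₁, hk₁v⟩⟩ := hp
        rw [kerBlocks_eq] at hB hC
        rcases Finset.mem_image.1 hB with ⟨b, -, rfl⟩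
        rcases Finset.mem_image.1 hC with ⟨c, -, rfl⟩
        have hvl : idx l = idx k₀ := by
          rw [hfibval idx b l hl, hfibval idx b k₀ hk₀]
        have hvc₁ : idx c₁ = idx k₁ := by
          rw [hfibval idx c c₁ hc₁, hfibval idx c k₁ hk₁]
        have hvc₂ : idx c₂ = idx c₁ := by
          rw [hfibval idx c c₂ hc₂, hfibval idx c c₁ hc₁]
        have hne : idx l ≠ idx c₁ := by
          intro hcon
          apply hBC
          rw [fib_congr idx ((mem_fib idx b l).1 hl),
            fib_congr idx ((mem_fib idx c c₁).1 hc₁)]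
          exact fib_congr idx hcon
        have hcc : c₁ < c₂ := hlt1.trans hlt2
        have hnotrel : ¬ kerGRelOn (E N) idx Finset.univ c₁ c₂ := by
          rintro ⟨-, hmain⟩
          apply hpE
          have := hmain l (Finset.mem_univ l)
            (by rw [min_eq_left hcc.le]; exact hlt1)
            (by rw [max_eq_right hcc.le]; exact hlt2) hne
          rw [hvl, hvc₁] at this
          rw [← hk₀v, ← hk₁v]
          exact this
        have hc₂fib : c₂ ∈ fib idx c₁ := (mem_fib idx c₁ c₂).2 hvc₂.symm
        have hsub : blk (E N) idx c₁ ⊆ {c₁} := by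
          intro x hx
          have hxfib : x ∈ fib idx c₁ := blk_subset_fib _ _ _ hx
          have hfibeq : fib idx c₁ = {c₁, c₂} := by
            apply (Finset.eq_of_subset_of_card_le ?_ ?_).symm
            · intro y hy
              rcases Finset.mem_insert.1 hy with rfl | hy
              · exact (mem_fib idx y y).2 rfl
              · rw [Finset.mem_singleton.1 hy]; exact hc₂fib
            · rw [hall2 c₁]
              rw [Finset.card_insert_of_notMem (by simp [hcc.ne]),
                Finset.card_singleton]
          rw [hfibeq] at hxfib
          rcases Finset.mem_insert.1 hxfib with rfl | hx2
          · exact Finset.mem_singleton_self _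
          · exfalso
            rw [Finset.mem_singleton.1 hx2] at hx
            simp only [blk, Finset.mem_filter, Finset.mem_univ, true_and] at hx
            exact hnotrel hx
        have : (blk (E N) idx c₁).card = 1 := by
          have h1 := Finset.card_le_card hsub
          rw [Finset.card_singleton] at h1
          have := hblk2 c₁
          omega
        exact absurd this (hsing c₁)
      · right
        push_neg at hall2
        obtain ⟨k, hk⟩ := hall2
        exact image_card_small idx hfib2 ⟨k, hk⟩
  -- assemble
  have hsplit : ∑ idx : Fin m → Fin N, T idx
      = (F.card : ℂ) + ∑ idx ∈ Finset.univ.filter fun idx => ¬ P idx, T idx := by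
    rw [← Finset.sum_filter_add_sum_filter_not Finset.univ P T]
    congr 1
    rw [← hF]
    rw [Finset.sum_congr rfl hstepA, Finset.sum_const, nsmul_eq_mul, mul_one]
  set R : ℂ := ∑ idx ∈ Finset.univ.filter fun idx => ¬ P idx, T idx with hR
  have hRbound : ‖R‖ ≤ (m : ℝ) ^ m * (N : ℝ) ^ ((m - 1) / 2) * D ^ m := by
    have hRsum : R = ∑ idx ∈ (Finset.univ.filter fun idx => ¬ P idx).filter
        (fun idx => (Finset.univ.image idx).card ≤ (m - 1) / 2), T idx := by
      rw [hR]
      symm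
      apply Finset.sum_filter_of_ne
      intro idx hidx hTne
      rcases hstepB idx (Finset.mem_filter.1 hidx).2 with h | h
      · exact absurd h hTne
      · exact h
    rw [hRsum]
    calc ‖∑ idx ∈ (Finset.univ.filter fun idx => ¬ P idx).filter
          (fun idx => (Finset.univ.image idx).card ≤ (m - 1) / 2), T idx‖
        ≤ ∑ idx ∈ (Finset.univ.filter fun idx => ¬ P idx).filter
          (fun idx => (Finset.univ.image idx).card ≤ (m - 1) / 2), ‖T idx‖ :=
          norm_sum_le _ _
      _ ≤ ((Finset.univ.filter fun idx => ¬ P idx).filter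
          (fun idx => (Finset.univ.image idx).card ≤ (m - 1) / 2)).card • (D ^ m) :=
          Finset.sum_le_card_nsmul _ _ _ (fun idx _ => hstepC idx)
      _ ≤ (m ^ m * N ^ ((m - 1) / 2) : ℕ) • (D ^ m) := by
          apply nsmul_le_nsmul_left (by positivity)
          refine le_trans (Finset.card_le_card ?_) (card_small_image m N ((m - 1) / 2) hm)
          intro idx hidx
          rw [Finset.mem_filter] at hidx ⊢
          exact ⟨Finset.mem_univ _, hidx.2⟩
      _ = (m : ℝ) ^ m * (N : ℝ) ^ ((m - 1) / 2) * D ^ m := by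
          rw [nsmul_eq_mul]
          push_cast
          ring
  -- final computation
  rw [hexp, hsplit]
  have hnorm : ‖((F.card : ℂ) + R) / ((s : ℝ) : ℂ) ^ m - (F.card : ℂ) / ((s : ℝ) : ℂ) ^ m‖
      = ‖R‖ / s ^ m := by
    rw [div_sub_div_same, add_sub_cancel_left, norm_div, norm_pow, Complex.norm_real,
      Real.norm_eq_abs, abs_of_pos hs0]
  rw [hnorm]
  have hNpow : (N : ℝ) ^ ((m - 1) / 2) ≤ s ^ (m - 1) := by
    rw [← hs2, ← pow_mul]
    apply pow_le_pow_right₀ hs1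
    omega
  have h1 : ‖R‖ ≤ (m : ℝ) ^ m * D ^ m * s ^ (m - 1) := by
    calc ‖R‖ ≤ (m : ℝ) ^ m * (N : ℝ) ^ ((m - 1) / 2) * D ^ m := hRbound
      _ ≤ (m : ℝ) ^ m * s ^ (m - 1) * D ^ m := by
          apply mul_le_mul_of_nonneg_right _ (by positivity)
          apply mul_le_mul_of_nonneg_left hNpow (by positivity)
      _ = (m : ℝ) ^ m * D ^ m * s ^ (m - 1) := by ring
  rw [div_le_div_iff₀ (by positivity) hs0]
  calc ‖R‖ * s ≤ ((m : ℝ) ^ m * D ^ m * s ^ (m - 1)) * s :=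
        mul_le_mul_of_nonneg_right h1 hs0.le
    _ = (m : ℝ) ^ m * D ^ m * s ^ m := by
        rw [mul_assoc, ← pow_succ]
        congr 2
        omega


end
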